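/- For k ≥ 2, n ≥ 0 and h ≥ 1, the number of k-noncrossing core-structures with h arcs satisfies C_k(n,h) = Σ_{b=0}^{h-1} (-1)^{h-b-1} C(h-1, b) T_{k,1}(n - 2h + 2b + 2, b+1), where T_{k,1}(m,j) is the number of k-noncrossing RNA structures on {1,...,m} with j arcs (no stack-length restriction). -/

import Mathlib

open Finset

/-- A partial matching on the vertex set {1,…,n}: a set of arcs (i,j) with
1 ≤ i < j ≤ n in which every vertex has degree ≤ 1. -/
def IsPartialMatching (n : ℕ) (A : Finset (ℕ × ℕ)) : Prop :=
  (∀ p ∈ A, 1 ≤ p.1 ∧ p.1 < p.2 ∧ p.2 ≤ n) ∧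
  (∀ p ∈ A, ∀ q ∈ A, p ≠ q → p.1 ≠ q.1 ∧ p.1 ≠ q.2 ∧ p.2 ≠ q.1 ∧ p.2 ≠ q.2)

/-- `A` contains `k` mutually crossing arcs, i.e. arcs
(i₁,j₁),…,(i_k,j_k) with i₁ < … < i_k < j₁ < … < j_k. -/
def HasKCrossing (k : ℕ) (A : Finset (ℕ × ℕ)) : Prop :=
  ∃ f : Fin k → ℕ × ℕ, (∀ t, f t ∈ A) ∧
    StrictMono (fun t => (f t).1) ∧ StrictMono (fun t => (f t).2) ∧
    ∀ s t : Fin k, (f s).1 < (f t).2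

/-- no arc of the form (i, i+1): minimum arc-length ≥ 2. -/
def NoOneArc (A : Finset (ℕ × ℕ)) : Prop := ∀ p ∈ A, p.1 + 1 < p.2

/-- every arc lies in a stack of σ parallel arcs ((a,b),(a+1,b-1),…):
every maximal stack has length ≥ σ. -/
def MinStack (σ : ℕ) (A : Finset (ℕ × ℕ)) : Prop :=
  ∀ p ∈ A, ∃ a b : ℕ, (∀ s < σ, (a + s, b - s) ∈ A) ∧ ∃ s < σ, p = (a + s, b - s)

/-- core condition: no two parallel arcs (i,j), (i+1,j-1). -/
def IsCore (A : Finset (ℕ × ℕ)) : Prop := ∀ p ∈ A, (p.1 + 1, p.2 - 1) ∉ A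

/-- k-noncrossing RNA structure on {1,…,n} with minimum stack-length ≥ σ. -/
def RNAStruct (k σ n : ℕ) (A : Finset (ℕ × ℕ)) : Prop :=
  IsPartialMatching n A ∧ ¬ HasKCrossing k A ∧ NoOneArc A ∧ MinStack σ A

/-- T_{k,σ}(n,h): number of k-noncrossing RNA structures on {1,…,n} with
minimum stack-length ≥ σ and h arcs. -/
noncomputable def Tcount (k σ n h : ℕ) : ℕ :=
  Nat.card {A : Finset (ℕ × ℕ) // RNAStruct k σ n A ∧ A.card = h}

/-- T_{k,σ}(n): number of k-noncrossing RNA structures on {1,…,n} with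
minimum stack-length ≥ σ. -/
noncomputable def Ttot (k σ n : ℕ) : ℕ :=
  Nat.card {A : Finset (ℕ × ℕ) // RNAStruct k σ n A}

/-- C_k(n,h): number of k-noncrossing core-structures on {1,…,n} with h arcs. -/
noncomputable def Ccount (k n h : ℕ) : ℕ :=
  Nat.card {A : Finset (ℕ × ℕ) // RNAStruct k 1 n A ∧ IsCore A ∧ A.card = h}

/-- C_k(n): number of k-noncrossing core-structures on {1,…,n}. -/
noncomputable def Ctot (k n : ℕ) : ℕ :=
  Nat.card {A : Finset (ℕ × ℕ) // RNAStruct k 1 n A ∧ IsCore A}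

/-- f_k(n,ℓ): number of k-noncrossing partial matchings of {1,…,n} with
exactly ℓ isolated vertices (1-arcs allowed). -/
noncomputable def fcount (k n ℓ : ℕ) : ℕ :=
  Nat.card {A : Finset (ℕ × ℕ) // IsPartialMatching n A ∧ ¬ HasKCrossing k A ∧
    2 * A.card + ℓ = n}

/-- Binomial coefficient C(t,r) for integer t, with the convention
that it vanishes for t < 0 (and for 0 ≤ t < r via Nat.choose). -/
def intChoose (t : ℤ) (r : ℕ) : ℕ := if 0 ≤ t then t.toNat.choose r else 0

/-!
Call an arc `r` of a structure *stacked* if `innerArc r = (r.1 + 1, r.2 - 1)` is an arc as well,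
so that core structures are those without stacked arcs. Deleting a stacked arc `p` (and closing
the two gaps) and adding an arc directly around an arc `q` (opening two gaps) are mutually inverse,
preserve being a `k`-noncrossing structure without 1-arcs, and change both the number of arcs and
the number of stacked arcs by one. Double counting pairs (structure, stacked arc) against pairs
(structure, arc) gives `(b + 1) S(m + 2, j + 1, b + 1) = j S(m, j, b)` for the number `S(m, j, b)`
of structures on `m` vertices with `j` arcs of which `b` are stacked. Hence
`S(m, j, b) = C(j - 1, b) C_k(m - 2b, j - b)`, so
`T_{k,1}(n, j) = Σ_b C(j - 1, b) C_k(n - 2b, j - b)`, and binomial inversion gives the theorem.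
-/

/-- The new label of an old vertex `v` once fresh vertices are inserted in front of the old
vertices `a` and `b`. -/
def openGaps (a b v : ℕ) : ℕ := v + (if a ≤ v then 1 else 0) + (if b ≤ v then 1 else 0)

/-- The new label of a vertex `v ∉ {a, b}` once the vertices `a` and `b` are deleted. -/
def closeGaps (a b v : ℕ) : ℕ := v - (if a < v then 1 else 0) - (if b < v then 1 else 0)

section Relabel

variable {a b x y v : ℕ}

theorem strictMono_openGaps (a b : ℕ) : StrictMono (openGaps a b) :=
  strictMono_nat_of_lt_succ fun v => by unfold openGaps; split_ifs <;> omega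

theorem openGaps_ne_left (hab : a ≤ b) (v : ℕ) : openGaps a b v ≠ a := by
  unfold openGaps; split_ifs <;> omega

theorem openGaps_ne_succ (hab : a ≤ b) (v : ℕ) : openGaps a b v ≠ b + 1 := by
  unfold openGaps; split_ifs <;> omega

theorem openGaps_add_one (ha : x + 1 ≠ a) (hb : x + 1 ≠ b) :
    openGaps a b (x + 1) = openGaps a b x + 1 := by
  unfold openGaps; split_ifs <;> omega

theorem eq_add_one_of_openGaps_add_one_eq (h : openGaps a b x + 1 = openGaps a b y) :
    y = x + 1 := by
  unfold openGaps at h; split_ifs at h <;> omega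

theorem closeGaps_openGaps (hab : a ≤ b) (v : ℕ) : closeGaps a (b + 1) (openGaps a b v) = v := by
  unfold closeGaps openGaps; split_ifs <;> omega

theorem openGaps_closeGaps (hab : a + 1 < b) (ha : v ≠ a) (hb : v ≠ b) :
    openGaps a (b - 1) (closeGaps a b v) = v := by
  unfold closeGaps openGaps; split_ifs <;> omega

theorem strictMonoOn_closeGaps (hab : a < b) :
    StrictMonoOn (closeGaps a b) {v | v ≠ a ∧ v ≠ b} := by
  rintro x ⟨hxa, hxb⟩ y ⟨hya, hyb⟩ hxy
  unfold closeGaps; split_ifs <;> omega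

end Relabel

namespace IsPartialMatching

variable {n m : ℕ} {A B : Finset (ℕ × ℕ)} {r s : ℕ × ℕ}

theorem eq_of_endpoint (hA : IsPartialMatching n A) (hr : r ∈ A) (hs : s ∈ A)
    (h : r.1 = s.1 ∨ r.1 = s.2 ∨ r.2 = s.1 ∨ r.2 = s.2) : r = s := by
  by_contra hne
  have := hA.2 r hr s hs hne
  tauto

theorem subset (hA : IsPartialMatching n A) (hBA : B ⊆ A) : IsPartialMatching n B :=
  ⟨fun r hr => hA.1 r (hBA hr), fun r hr s hs => hA.2 r (hBA hr) s (hBA hs)⟩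

theorem two_le_of_mem (hA : IsPartialMatching n A) (hr : r ∈ A) : 2 ≤ n := by
  have := hA.1 r hr
  omega

end IsPartialMatching

theorem IsPartialMatching.insert {n : ℕ} {A : Finset (ℕ × ℕ)} {a : ℕ × ℕ}
    (hA : IsPartialMatching n A) (ha : 1 ≤ a.1 ∧ a.1 < a.2 ∧ a.2 ≤ n)
    (hfresh : ∀ r ∈ A, a.1 ≠ r.1 ∧ a.1 ≠ r.2 ∧ a.2 ≠ r.1 ∧ a.2 ≠ r.2) :
    IsPartialMatching n (insert a A) := by
  refine ⟨fun r hr => ?_, fun r hr s hs hrs => ?_⟩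
  · rcases mem_insert.mp hr with rfl | hr
    exacts [ha, hA.1 r hr]
  rcases mem_insert.mp hr with rfl | hrA <;> rcases mem_insert.mp hs with rfl | hsA
  · exact absurd rfl hrs
  · exact hfresh s hsA
  · have := hfresh r hrA
    omega
  · exact hA.2 r hrA s hsA hrs

theorem IsPartialMatching.image {n m : ℕ} {A : Finset (ℕ × ℕ)} {φ : ℕ → ℕ} {S : Set ℕ}
    (hA : IsPartialMatching n A) (hφ : StrictMonoOn φ S) (hS : ∀ r ∈ A, r.1 ∈ S ∧ r.2 ∈ S)
    (hbd : ∀ r ∈ A, 1 ≤ φ r.1 ∧ φ r.2 ≤ m) : IsPartialMatching m (A.image (Prod.map φ φ)) := by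
  have hinj := hφ.injOn
  refine ⟨?_, ?_⟩
  · simp only [mem_image, forall_exists_index, and_imp]
    rintro _ r hr rfl
    exact ⟨(hbd r hr).1, hφ (hS r hr).1 (hS r hr).2 (hA.1 r hr).2.1, (hbd r hr).2⟩
  · simp only [mem_image, forall_exists_index, and_imp]
    rintro _ r hr rfl _ s hs rfl hne
    have hrs : r ≠ s := fun h => hne (h ▸ rfl)
    obtain ⟨h11, h12, h21, h22⟩ := hA.2 r hr s hs hrs
    obtain ⟨r1, r2⟩ := hS r hr
    obtain ⟨s1, s2⟩ := hS s hs
    exact ⟨fun h => h11 (hinj r1 s1 h), fun h => h12 (hinj r1 s2 h),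
      fun h => h21 (hinj r2 s1 h), fun h => h22 (hinj r2 s2 h)⟩

section Crossing

variable {k : ℕ} {A B : Finset (ℕ × ℕ)}

theorem HasKCrossing.mono (h : HasKCrossing k A) (hAB : A ⊆ B) : HasKCrossing k B := by
  obtain ⟨f, hf, h1, h2, h3⟩ := h
  exact ⟨f, fun t => hAB (hf t), h1, h2, h3⟩

theorem HasKCrossing.of_image {φ : ℕ → ℕ} {S : Set ℕ} (hφ : StrictMonoOn φ S)
    (hS : ∀ r ∈ A, r.1 ∈ S ∧ r.2 ∈ S) (h : HasKCrossing k (A.image (Prod.map φ φ))) :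
    HasKCrossing k A := by
  obtain ⟨f, hf, h1, h2, h3⟩ := h
  choose g hg hgf using fun t => mem_image.mp (hf t)
  have hlt : ∀ {x y}, x ∈ S → y ∈ S → φ x < φ y → x < y := fun hx hy => (hφ.lt_iff_lt hx hy).mp
  refine ⟨g, hg, fun s t hst => ?_, fun s t hst => ?_, fun s t => ?_⟩
  · have := h1 hst
    simp only [← hgf, Prod.map_fst] at this
    exact hlt (hS _ (hg s)).1 (hS _ (hg t)).1 this
  · have := h2 hst
    simp only [← hgf, Prod.map_snd] at this
    exact hlt (hS _ (hg s)).2 (hS _ (hg t)).2 this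
  · have := h3 s t
    simp only [← hgf, Prod.map_fst, Prod.map_snd] at this
    exact hlt (hS _ (hg s)).1 (hS _ (hg t)).2 this

/-- Two nested arcs never belong to the same crossing. -/
theorem HasKCrossing.erase_or_erase_of_nested {a b : ℕ × ℕ} (h : HasKCrossing k A)
    (hab : a.1 < b.1 ∧ b.2 < a.2) : HasKCrossing k (A.erase a) ∨ HasKCrossing k (A.erase b) := by
  obtain ⟨f, hf, h1, h2, h3⟩ := h
  by_cases ha : ∃ s, f s = a
  · by_cases hb : ∃ t, f t = b
    · obtain ⟨s, rfl⟩ := ha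
      obtain ⟨t, rfl⟩ := hb
      rcases lt_trichotomy s t with hst | rfl | hst
      · have := h2 hst
        dsimp only at this
        omega
      · omega
      · have := h1 hst
        dsimp only at this
        omega
    · push Not at hb
      exact Or.inr ⟨f, fun t => mem_erase.mpr ⟨hb t, hf t⟩, h1, h2, h3⟩
  · push Not at ha
    exact Or.inl ⟨f, fun t => mem_erase.mpr ⟨ha t, hf t⟩, h1, h2, h3⟩

end Crossing

theorem NoOneArc.image {A : Finset (ℕ × ℕ)} {φ : ℕ → ℕ} (hφ : StrictMono φ) (hA : NoOneArc A) :
    NoOneArc (A.image (Prod.map φ φ)) := by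
  simp only [NoOneArc, mem_image, forall_exists_index, and_imp]
  rintro _ r hr rfl
  calc φ r.1 + 1 < 2 + φ r.1 := by omega
    _ ≤ φ (2 + r.1) := hφ.add_le_nat 2 r.1
    _ ≤ φ r.2 := hφ.monotone (by have := hA r hr; omega)

def innerArc (r : ℕ × ℕ) : ℕ × ℕ := (r.1 + 1, r.2 - 1)

def stackedArcs (A : Finset (ℕ × ℕ)) : Finset (ℕ × ℕ) := A.filter (fun r => innerArc r ∈ A)

theorem isCore_iff_stackedArcs_eq_empty {A : Finset (ℕ × ℕ)} : IsCore A ↔ stackedArcs A = ∅ := by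
  rw [stackedArcs, filter_eq_empty_iff]
  rfl

/-- The vertices are relabelled to make room for a new arc `(q.1, q.2 + 2)` directly enclosing
`q`, which becomes `(q.1 + 1, q.2 + 1)`. -/
def addOuterArc (q : ℕ × ℕ) (A : Finset (ℕ × ℕ)) : Finset (ℕ × ℕ) :=
  insert (q.1, q.2 + 2) (A.image (Prod.map (openGaps q.1 (q.2 + 1)) (openGaps q.1 (q.2 + 1))))

def removeArc (p : ℕ × ℕ) (A : Finset (ℕ × ℕ)) : Finset (ℕ × ℕ) :=
  (A.erase p).image (Prod.map (closeGaps p.1 p.2) (closeGaps p.1 p.2))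

section AddOuterArc

variable {k m : ℕ} {A : Finset (ℕ × ℕ)} {q : ℕ × ℕ}

theorem outerArc_notMem_image (hq : q.1 < q.2) :
    (q.1, q.2 + 2) ∉ A.image (Prod.map (openGaps q.1 (q.2 + 1)) (openGaps q.1 (q.2 + 1))) := by
  simp only [mem_image, not_exists, not_and]
  intro r _ h
  exact openGaps_ne_left (by omega) r.1 (congrArg Prod.fst h)

theorem card_addOuterArc (hq : q.1 < q.2) : (addOuterArc q A).card = A.card + 1 := by
  rw [addOuterArc, card_insert_of_notMem (outerArc_notMem_image hq),
    card_image_of_injective _ ((strictMono_openGaps _ _).injective.prodMap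
      (strictMono_openGaps _ _).injective)]

/-- The two arcs of the new stack are interchangeable: `addOuterArc q A` is also obtained by
adding `(q.1 + 1, q.2 + 1)` directly inside `q`, which becomes `(q.1, q.2 + 2)`. -/
theorem addOuterArc_eq_insert_image (hA : IsPartialMatching m A) (hq : q ∈ A) :
    addOuterArc q A = insert (q.1 + 1, q.2 + 1)
      (A.image (Prod.map (openGaps (q.1 + 1) q.2) (openGaps (q.1 + 1) q.2))) := by
  have hq12 := (hA.1 q hq).2.1
  have hrest : (A.erase q).image (Prod.map (openGaps q.1 (q.2 + 1)) (openGaps q.1 (q.2 + 1))) =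
      (A.erase q).image (Prod.map (openGaps (q.1 + 1) q.2) (openGaps (q.1 + 1) q.2)) := by
    refine image_congr fun r hr => ?_
    obtain ⟨h11, h12, h21, h22⟩ := hA.2 r (mem_of_mem_erase hr) q hq (ne_of_mem_erase hr)
    simp only [Prod.map, Prod.mk.injEq, openGaps]
    constructor <;> split_ifs <;> omega
  have hφ : Prod.map (openGaps q.1 (q.2 + 1)) (openGaps q.1 (q.2 + 1)) q = (q.1 + 1, q.2 + 1) := by
    simp only [Prod.map, openGaps, Prod.mk.injEq]
    constructor <;> split_ifs <;> omega
  have hμ : Prod.map (openGaps (q.1 + 1) q.2) (openGaps (q.1 + 1) q.2) q = (q.1, q.2 + 2) := by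
    simp only [Prod.map, openGaps, Prod.mk.injEq]
    constructor <;> split_ifs <;> omega
  rw [addOuterArc, ← insert_erase hq, image_insert, image_insert, hrest, hφ, hμ, insert_comm]

theorem isPartialMatching_addOuterArc (hA : IsPartialMatching m A) (hq : q ∈ A) :
    IsPartialMatching (m + 2) (addOuterArc q A) := by
  obtain ⟨hq1, hq12, hq2⟩ := hA.1 q hq
  refine IsPartialMatching.insert ?_ ⟨hq1, by omega, by omega⟩ ?_
  · refine hA.image ((strictMono_openGaps _ _).strictMonoOn Set.univ) (by simp) fun r hr => ?_
    have := hA.1 r hr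
    simp only [openGaps]
    constructor <;> split_ifs <;> omega
  · simp only [mem_image, forall_exists_index, and_imp]
    rintro _ r _ rfl
    have h1 := openGaps_ne_left (a := q.1) (b := q.2 + 1) (by omega)
    have h2 := openGaps_ne_succ (a := q.1) (b := q.2 + 1) (by omega)
    exact ⟨(h1 r.1).symm, (h1 r.2).symm, (h2 r.1).symm, (h2 r.2).symm⟩

theorem noOneArc_addOuterArc (hA : NoOneArc A) (hq : q.1 < q.2) : NoOneArc (addOuterArc q A) := by
  intro r hr
  rcases mem_insert.mp hr with rfl | hr
  · dsimp only
    omega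
  · exact hA.image (strictMono_openGaps _ _) r hr

theorem not_hasKCrossing_addOuterArc (hA : IsPartialMatching m A) (hq : q ∈ A)
    (hk : ¬HasKCrossing k A) : ¬HasKCrossing k (addOuterArc q A) := by
  have hq12 := (hA.1 q hq).2.1
  have hS : ∀ r ∈ A, r.1 ∈ Set.univ ∧ r.2 ∈ Set.univ := by simp
  intro h
  rcases h.erase_or_erase_of_nested (a := (q.1, q.2 + 2)) (b := (q.1 + 1, q.2 + 1))
    ⟨by simp, by simp⟩ with h | h
  · exact hk ((h.mono (erase_insert_subset _ _)).of_image
      ((strictMono_openGaps _ _).strictMonoOn _) hS)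
  · rw [addOuterArc_eq_insert_image hA hq] at h
    exact hk ((h.mono (erase_insert_subset _ _)).of_image
      ((strictMono_openGaps _ _).strictMonoOn _) hS)

end AddOuterArc

section AddOuterArcStacks

variable {m : ℕ} {A : Finset (ℕ × ℕ)} {q r : ℕ × ℕ}

theorem innerArc_mem_of_innerArc_map_mem_addOuterArc (hA : IsPartialMatching m A) (hq : q ∈ A)
    (hr : r ∈ A) (h : innerArc (Prod.map (openGaps q.1 (q.2 + 1)) (openGaps q.1 (q.2 + 1)) r) ∈
      addOuterArc q A) : innerArc r ∈ A := by
  have hq12 := (hA.1 q hq).2.1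
  have hr12 := (hA.1 r hr).2.1
  simp only [addOuterArc, mem_insert, mem_image, innerArc, Prod.map, Prod.mk.injEq] at h ⊢
  rcases h with ⟨h1, h2⟩ | ⟨s, hs, h1, h2⟩
  · have : r.1 + 1 = q.1 ∧ r.2 = q.2 + 1 := by
      unfold openGaps at h1 h2
      split_ifs at h1 h2 <;> omega
    convert hq using 2 <;> omega
  · have hlt := strictMono_openGaps q.1 (q.2 + 1) hr12
    convert hs using 2
    · exact (eq_add_one_of_openGaps_add_one_eq h1.symm).symm
    · have := eq_add_one_of_openGaps_add_one_eq (a := q.1) (b := q.2 + 1) (x := s.2) (y := r.2)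
      omega

theorem innerArc_map_mem_addOuterArc (hA : IsPartialMatching m A) (hq : q ∈ A) (hr : r ∈ A)
    (h : innerArc r ∈ A) :
    innerArc (Prod.map (openGaps q.1 (q.2 + 1)) (openGaps q.1 (q.2 + 1)) r) ∈ addOuterArc q A := by
  have hq12 := (hA.1 q hq).2.1
  obtain ⟨hr1, hr12, -⟩ := hA.1 r hr
  simp only [addOuterArc, mem_insert, mem_image, innerArc, Prod.map, Prod.mk.injEq] at h ⊢
  by_cases hrq : (r.1 + 1, r.2 - 1) = q
  · left
    simp only [← hrq, openGaps]
    constructor <;> split_ifs <;> omega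
  · right
    obtain ⟨h11, -, -, h22⟩ := hA.2 _ h q hq hrq
    have hr1q : r.1 ≠ q.2 := fun he => by
      have := congrArg Prod.fst (hA.eq_of_endpoint hr hq (Or.inr (Or.inl he)))
      omega
    have hr2q : r.2 ≠ q.1 := fun he => by
      have := congrArg Prod.snd (hA.eq_of_endpoint hr hq (Or.inr (Or.inr (Or.inl he))))
      omega
    obtain ⟨c, hc⟩ : ∃ c, r.2 = c + 1 := ⟨r.2 - 1, by omega⟩
    simp only [hc, Nat.add_sub_cancel] at h h22 hr2q ⊢
    exact ⟨_, h, openGaps_add_one h11 (by omega),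
      by rw [openGaps_add_one hr2q (by omega), Nat.add_sub_cancel]⟩

theorem stackedArcs_addOuterArc (hA : IsPartialMatching m A) (hq : q ∈ A) :
    stackedArcs (addOuterArc q A) = insert (q.1, q.2 + 2)
      ((stackedArcs A).image (Prod.map (openGaps q.1 (q.2 + 1)) (openGaps q.1 (q.2 + 1)))) := by
  have hq12 := (hA.1 q hq).2.1
  have hnew : innerArc (q.1, q.2 + 2) ∈ insert (q.1, q.2 + 2)
      (A.image (Prod.map (openGaps q.1 (q.2 + 1)) (openGaps q.1 (q.2 + 1)))) := by
    refine mem_insert_of_mem (mem_image.mpr ⟨q, hq, ?_⟩)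
    simp only [innerArc, Prod.map, openGaps]
    congr 1 <;> split_ifs <;> omega
  rw [stackedArcs, addOuterArc, filter_insert, if_pos hnew, filter_image, stackedArcs]
  exact congrArg _ (congrArg _ (filter_congr fun r hr =>
    ⟨innerArc_mem_of_innerArc_map_mem_addOuterArc hA hq hr, innerArc_map_mem_addOuterArc hA hq hr⟩))

theorem card_stackedArcs_addOuterArc (hA : IsPartialMatching m A) (hq : q ∈ A) :
    (stackedArcs (addOuterArc q A)).card = (stackedArcs A).card + 1 := by
  have hq12 := (hA.1 q hq).2.1
  rw [stackedArcs_addOuterArc hA hq, card_insert_of_notMem (outerArc_notMem_image hq12),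
    card_image_of_injective _ ((strictMono_openGaps _ _).injective.prodMap
      (strictMono_openGaps _ _).injective)]

end AddOuterArcStacks

section RemoveArc

variable {k m n : ℕ} {A : Finset (ℕ × ℕ)} {p q : ℕ × ℕ}

theorem isPartialMatching_removeArc (hA : IsPartialMatching (m + 2) A) (hp : p ∈ A) :
    IsPartialMatching m (removeArc p A) := by
  have hp' := hA.1 p hp
  refine (hA.subset (erase_subset p A)).image (strictMonoOn_closeGaps hp'.2.1)
    (fun r hr => ?_) fun r hr => ?_
  all_goals
    have := hA.1 r (mem_of_mem_erase hr)
    obtain ⟨h11, h12, h21, h22⟩ := hA.2 r (mem_of_mem_erase hr) p hp (ne_of_mem_erase hr)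
  · exact ⟨⟨h11, h12⟩, ⟨h21, h22⟩⟩
  · unfold closeGaps
    constructor <;> split_ifs <;> omega

theorem not_hasKCrossing_removeArc (hA : IsPartialMatching n A) (hp : p ∈ A)
    (hk : ¬HasKCrossing k A) : ¬HasKCrossing k (removeArc p A) := fun h =>
  hk ((h.of_image (strictMonoOn_closeGaps (hA.1 p hp).2.1) fun r hr =>
    have := hA.2 r (mem_of_mem_erase hr) p hp (ne_of_mem_erase hr)
    ⟨⟨this.1, this.2.1⟩, ⟨this.2.2.1, this.2.2.2⟩⟩).mono (erase_subset p A))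

/-- Removing `p` can only create a 1-arc from an arc passing around an endpoint of `p`, and such an
arc would share an endpoint with `innerArc p`. -/
theorem noOneArc_removeArc (hA : IsPartialMatching n A) (hno : NoOneArc A)
    (hp : p ∈ stackedArcs A) : NoOneArc (removeArc p A) := by
  obtain ⟨hpA, hin⟩ := mem_filter.mp hp
  have hin12 : p.1 + 1 < p.2 - 1 := (hA.1 _ hin).2.1
  simp only [NoOneArc, removeArc, mem_image, forall_exists_index, and_imp]
  rintro _ r hr rfl
  have hrA := mem_of_mem_erase hr
  obtain ⟨h11, h12, h21, h22⟩ := hA.2 r hrA p hpA (ne_of_mem_erase hr)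
  have hr12 := hno r hrA
  by_contra hcon
  have hmid : r.2 = r.1 + 2 ∧ (r.1 + 1 = p.1 ∨ r.1 + 1 = p.2) := by
    change ¬closeGaps p.1 p.2 r.1 + 1 < closeGaps p.1 p.2 r.2 at hcon
    unfold closeGaps at hcon
    split_ifs at hcon <;> omega
  have hrin := hA.eq_of_endpoint hrA hin (by simp only [innerArc]; omega)
  simp only [hrin, innerArc] at hmid h11 h22
  omega

theorem innerArc_image_mem_removeArc (hA : IsPartialMatching n A) (hp : p ∈ stackedArcs A) :
    (p.1, p.2 - 2) ∈ removeArc p A := by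
  obtain ⟨hpA, hin⟩ := mem_filter.mp hp
  have hin12 : p.1 + 1 < p.2 - 1 := (hA.1 _ hin).2.1
  refine mem_image.mpr ⟨innerArc p, mem_erase.mpr ⟨fun h => ?_, hin⟩, ?_⟩
  · simp only [innerArc, Prod.ext_iff] at h
    omega
  · have h1 : closeGaps p.1 p.2 (p.1 + 1) = p.1 := by unfold closeGaps; split_ifs <;> omega
    have h2 : closeGaps p.1 p.2 (p.2 - 1) = p.2 - 2 := by unfold closeGaps; split_ifs <;> omega
    simp only [innerArc, Prod.map, h1, h2]

theorem removeArc_addOuterArc (hq : q.1 < q.2) :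
    removeArc (q.1, q.2 + 2) (addOuterArc q A) = A := by
  rw [removeArc, addOuterArc, erase_insert (outerArc_notMem_image hq), image_image]
  refine (image_congr fun r _ => ?_).trans image_id
  simp only [Function.comp, Prod.map, closeGaps_openGaps (show q.1 ≤ q.2 + 1 by omega), id]

theorem addOuterArc_removeArc (hA : IsPartialMatching n A) (hp : p ∈ stackedArcs A) :
    addOuterArc (p.1, p.2 - 2) (removeArc p A) = A := by
  obtain ⟨hpA, hin⟩ := mem_filter.mp hp
  have hin12 : p.1 + 1 < p.2 - 1 := (hA.1 _ hin).2.1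
  have hp12 : p.1 + 1 < p.2 := by omega
  rw [addOuterArc, removeArc, image_image, show p.2 - 2 + 1 = p.2 - 1 by omega,
    show (p.1, p.2 - 2 + 2) = p by ext <;> simp only; omega]
  refine (congrArg _ ((image_congr fun r hr => ?_).trans image_id)).trans (insert_erase hpA)
  obtain ⟨h11, h12, h21, h22⟩ := hA.2 r (mem_of_mem_erase hr) p hpA (ne_of_mem_erase hr)
  simp only [Function.comp, Prod.map, openGaps_closeGaps hp12 h11 h12,
    openGaps_closeGaps hp12 h21 h22, id]

end RemoveArc

section Counting

variable {k m n j b : ℕ} {A : Finset (ℕ × ℕ)}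

theorem rnaStruct_one_iff :
    RNAStruct k 1 n A ↔ IsPartialMatching n A ∧ ¬HasKCrossing k A ∧ NoOneArc A :=
  ⟨fun ⟨h1, h2, h3, _⟩ => ⟨h1, h2, h3⟩, fun ⟨h1, h2, h3⟩ => ⟨h1, h2, h3, fun p hp =>
    ⟨p.1, p.2, fun s hs => by simpa [Nat.lt_one_iff.mp hs] using hp, 0, one_pos, rfl⟩⟩⟩

open scoped Classical in
noncomputable def rnaStructures (k n j : ℕ) : Finset (Finset (ℕ × ℕ)) :=
  (Icc 1 n ×ˢ Icc 1 n).powerset.filter fun A => RNAStruct k 1 n A ∧ A.card = j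

noncomputable def rnaStructuresWithStacks (k n j b : ℕ) : Finset (Finset (ℕ × ℕ)) :=
  (rnaStructures k n j).filter fun A => (stackedArcs A).card = b

theorem mem_rnaStructures : A ∈ rnaStructures k n j ↔ RNAStruct k 1 n A ∧ A.card = j := by
  classical
  refine mem_filter.trans ⟨And.right, fun h => ⟨mem_powerset.mpr fun r hr => ?_, h⟩⟩
  have := h.1.1.1 r hr
  simp only [mem_product, mem_Icc]
  omega

theorem mem_rnaStructuresWithStacks :
    A ∈ rnaStructuresWithStacks k n j b ↔
      (IsPartialMatching n A ∧ ¬HasKCrossing k A ∧ NoOneArc A) ∧ A.card = j ∧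
        (stackedArcs A).card = b := by
  rw [rnaStructuresWithStacks, mem_filter, mem_rnaStructures, rnaStruct_one_iff, and_assoc]

theorem Tcount_eq_card_rnaStructures : Tcount k 1 n j = (rnaStructures k n j).card :=
  Nat.subtype_card _ fun _ => mem_rnaStructures

theorem Ccount_eq_card_rnaStructuresWithStacks :
    Ccount k n j = (rnaStructuresWithStacks k n j 0).card := by
  refine Nat.subtype_card _ fun A => ?_
  rw [mem_rnaStructuresWithStacks, ← rnaStruct_one_iff, card_eq_zero,
    ← isCore_iff_stackedArcs_eq_empty]
  tauto

theorem card_stackedArcs_lt (hA : A.Nonempty) : (stackedArcs A).card < A.card := by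
  obtain ⟨r, hr, hmax⟩ := A.exists_max_image Prod.fst hA
  refine card_lt_card ⟨filter_subset _ _, fun h => ?_⟩
  have := hmax _ (mem_filter.mp (h hr)).2
  simp only [innerArc] at this
  omega

theorem card_rnaStructures_eq_sum (hj : 0 < j) :
    (rnaStructures k n j).card = ∑ b ∈ range j, (rnaStructuresWithStacks k n j b).card :=
  card_eq_sum_card_fiberwise fun A hA => by
    obtain ⟨-, hcard⟩ := mem_rnaStructures.mp hA
    have := card_stackedArcs_lt (card_pos.mp (hcard ▸ hj))
    simpa [hcard] using this

theorem rnaStructuresWithStacks_eq_empty (hm : m < 2) (hj : j ≠ 0) :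
    rnaStructuresWithStacks k m j b = ∅ :=
  eq_empty_of_forall_notMem fun A hA => by
    obtain ⟨⟨hM, -⟩, hcard, -⟩ := mem_rnaStructuresWithStacks.mp hA
    obtain ⟨r, hr⟩ := card_pos.mp (show 0 < A.card by omega)
    exact absurd (hM.two_le_of_mem hr) (by omega)

end Counting

section DoubleCounting

variable {k m j b : ℕ} {A : Finset (ℕ × ℕ)} {p q : ℕ × ℕ}

theorem addOuterArc_mem_rnaStructuresWithStacks (hA : A ∈ rnaStructuresWithStacks k m j b)
    (hq : q ∈ A) : addOuterArc q A ∈ rnaStructuresWithStacks k (m + 2) (j + 1) (b + 1) := by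
  obtain ⟨⟨hM, hk, hno⟩, hcard, hstack⟩ := mem_rnaStructuresWithStacks.mp hA
  have hq12 := (hM.1 q hq).2.1
  exact mem_rnaStructuresWithStacks.mpr ⟨⟨isPartialMatching_addOuterArc hM hq,
    not_hasKCrossing_addOuterArc hM hq hk, noOneArc_addOuterArc hno hq12⟩,
    by rw [card_addOuterArc hq12, hcard], by rw [card_stackedArcs_addOuterArc hM hq, hstack]⟩

theorem removeArc_mem_rnaStructuresWithStacks
    (hA : A ∈ rnaStructuresWithStacks k (m + 2) (j + 1) (b + 1)) (hp : p ∈ stackedArcs A) :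
    removeArc p A ∈ rnaStructuresWithStacks k m j b := by
  obtain ⟨⟨hM, hk, hno⟩, hcard, hstack⟩ := mem_rnaStructuresWithStacks.mp hA
  have hpA := (mem_filter.mp hp).1
  have hM' := isPartialMatching_removeArc hM hpA
  have hmark := innerArc_image_mem_removeArc hM hp
  have hround := addOuterArc_removeArc hM hp
  refine mem_rnaStructuresWithStacks.mpr ⟨⟨hM', not_hasKCrossing_removeArc hM hpA hk,
    noOneArc_removeArc hM hno hp⟩, ?_, ?_⟩
  · have := card_addOuterArc (A := removeArc p A) (hM'.1 _ hmark).2.1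
    rw [hround] at this
    omega
  · have := card_stackedArcs_addOuterArc hM' hmark
    rw [hround] at this
    omega

/-- Removing a stacked arc `p` and adding an arc around `(p.1, p.2 - 2)` are inverse. -/
theorem card_sigma_stackedArcs_eq_card_sigma (k m j b : ℕ) :
    ((rnaStructuresWithStacks k (m + 2) (j + 1) (b + 1)).sigma stackedArcs).card =
      ((rnaStructuresWithStacks k m j b).sigma fun A => A).card := by
  refine card_nbij' (fun x => ⟨removeArc x.2 x.1, (x.2.1, x.2.2 - 2)⟩)
    (fun y => ⟨addOuterArc y.2 y.1, (y.2.1, y.2.2 + 2)⟩) ?_ ?_ ?_ ?_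
  · rintro ⟨A, p⟩ hx
    obtain ⟨hA, hp⟩ := mem_sigma.mp hx
    exact mem_sigma.mpr ⟨removeArc_mem_rnaStructuresWithStacks hA hp,
      innerArc_image_mem_removeArc (mem_rnaStructuresWithStacks.mp hA).1.1 hp⟩
  · rintro ⟨A, q⟩ hy
    obtain ⟨hA, hq⟩ := mem_sigma.mp hy
    refine mem_sigma.mpr ⟨addOuterArc_mem_rnaStructuresWithStacks hA hq, ?_⟩
    rw [stackedArcs_addOuterArc (mem_rnaStructuresWithStacks.mp hA).1.1 hq]
    exact mem_insert_self _ _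
  · rintro ⟨A, p⟩ hx
    obtain ⟨hA, hp⟩ := mem_sigma.mp hx
    have hM := (mem_rnaStructuresWithStacks.mp hA).1.1
    have hin : p.1 + 1 < p.2 - 1 := (hM.1 _ (mem_filter.mp hp).2).2.1
    refine Sigma.ext (addOuterArc_removeArc hM hp) (heq_of_eq ?_)
    ext <;> simp only
    omega
  · rintro ⟨A, q⟩ hy
    obtain ⟨hA, hq⟩ := mem_sigma.mp hy
    have hq12 := ((mem_rnaStructuresWithStacks.mp hA).1.1.1 q hq).2.1
    exact Sigma.ext (removeArc_addOuterArc hq12) (heq_of_eq (by simp))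

theorem succ_mul_card_rnaStructuresWithStacks (k m j b : ℕ) :
    (b + 1) * (rnaStructuresWithStacks k (m + 2) (j + 1) (b + 1)).card =
      j * (rnaStructuresWithStacks k m j b).card := by
  have h := card_sigma_stackedArcs_eq_card_sigma k m j b
  rw [card_sigma, card_sigma,
    sum_const_nat fun A hA => (mem_rnaStructuresWithStacks.mp hA).2.2,
    sum_const_nat fun A hA => (mem_rnaStructuresWithStacks.mp hA).2.1] at h
  linarith

theorem card_rnaStructuresWithStacks (hb : b < j) :
    (rnaStructuresWithStacks k m j b).card =
      (j - 1).choose b * (rnaStructuresWithStacks k (m - 2 * b) (j - b) 0).card := by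
  induction b generalizing m j with
  | zero => simp
  | succ b ih =>
    obtain ⟨j, rfl⟩ : ∃ j', j = j' + 1 := ⟨j - 1, by omega⟩
    rw [Nat.add_sub_cancel, Nat.add_sub_add_right]
    by_cases hm : m < 2
    · rw [rnaStructuresWithStacks_eq_empty hm (by omega),
        rnaStructuresWithStacks_eq_empty (by omega) (by omega), card_empty, mul_zero]
    obtain ⟨m, rfl⟩ : ∃ m', m = m' + 2 := ⟨m - 2, by omega⟩
    have hstep := succ_mul_card_rnaStructuresWithStacks k m j b
    rw [ih (by omega)] at hstep
    have hchoose : j * (j - 1).choose b = j.choose (b + 1) * (b + 1) := by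
      obtain ⟨i, rfl⟩ : ∃ i, j = i + 1 := ⟨j - 1, by omega⟩
      exact Nat.add_one_mul_choose_eq i b
    rw [show m + 2 - 2 * (b + 1) = m - 2 * b by omega]
    refine Nat.eq_of_mul_eq_mul_left (show 0 < b + 1 by omega) ?_
    rw [hstep, ← mul_assoc, hchoose]
    ring

end DoubleCounting

theorem Tcount_eq_sum_choose_mul_Ccount {k n j : ℕ} (hj : 0 < j) :
    Tcount k 1 n j = ∑ b ∈ range j, (j - 1).choose b * Ccount k (n - 2 * b) (j - b) := by
  rw [Tcount_eq_card_rnaStructures, card_rnaStructures_eq_sum hj]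
  refine sum_congr rfl fun b hb => ?_
  rw [card_rnaStructuresWithStacks (mem_range.mp hb), Ccount_eq_card_rnaStructuresWithStacks]

theorem sum_neg_one_pow_mul_choose_mul_choose {N c : ℕ} (hc : c ≤ N) :
    ∑ b ∈ range (N + 1), (-1 : ℤ) ^ (N - b) * (N.choose b * b.choose c : ℕ) =
      if c = N then 1 else 0 := by
  obtain ⟨M, rfl⟩ := Nat.exists_eq_add_of_le hc
  rw [add_assoc, sum_range_add, sum_eq_zero fun b hb => by
    rw [Nat.choose_eq_zero_of_lt (mem_range.mp hb), mul_zero, Nat.cast_zero, mul_zero], zero_add]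
  calc ∑ e ∈ range (M + 1),
        (-1 : ℤ) ^ (c + M - (c + e)) * ((c + M).choose (c + e) * (c + e).choose c : ℕ)
      = (c + M).choose c * ∑ e ∈ range (M + 1), 1 ^ e * (-1 : ℤ) ^ (M - e) * M.choose e := by
        rw [mul_sum]
        refine sum_congr rfl fun e _ => ?_
        rw [Nat.choose_mul (by omega), Nat.add_sub_add_left, Nat.add_sub_cancel_left,
          Nat.add_sub_cancel_left]
        push_cast
        ring
    _ = if c = c + M then 1 else 0 := by
        rw [← add_pow, add_neg_cancel, zero_pow_eq]
        by_cases hM : M = 0 <;> simp [hM]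

theorem sum_neg_one_pow_mul_choose_mul_sum_choose (a : ℕ → ℤ) (N : ℕ) :
    ∑ b ∈ range (N + 1), (-1 : ℤ) ^ (N - b) * N.choose b * ∑ c ∈ range (b + 1), b.choose c * a c =
      a N := by
  have hext : ∀ b ∈ range (N + 1),
      ∑ c ∈ range (b + 1), (b.choose c : ℤ) * a c = ∑ c ∈ range (N + 1), (b.choose c : ℤ) * a c :=
    fun b hb => sum_subset (range_subset_range.mpr (mem_range.mp hb)) fun c _ hc => by
      rw [Nat.choose_eq_zero_of_lt (by simpa using hc), Nat.cast_zero, zero_mul]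
  rw [sum_congr rfl fun b hb => by rw [hext b hb, mul_sum], sum_comm]
  calc ∑ c ∈ range (N + 1), ∑ b ∈ range (N + 1),
        (-1 : ℤ) ^ (N - b) * N.choose b * (b.choose c * a c)
      = ∑ c ∈ range (N + 1), (if c = N then 1 else 0) * a c := by
        refine sum_congr rfl fun c hc => ?_
        rw [← sum_neg_one_pow_mul_choose_mul_choose (Nat.lt_succ_iff.mp (mem_range.mp hc)), sum_mul]
        refine sum_congr rfl fun b _ => ?_
        push_cast
        ring
    _ = a N := by simp

theorem stmt12_general (k n h : ℕ) (hh : 1 ≤ h) :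
    (Ccount k n h : ℤ) = ∑ b ∈ Finset.range h,
      (-1 : ℤ) ^ (h - b - 1) * (Nat.choose (h - 1) b : ℤ) *
        (Tcount k 1 (n - 2 * (h - b - 1)) (b + 1) : ℤ) := by
  obtain ⟨N, rfl⟩ : ∃ N, h = N + 1 := ⟨h - 1, by omega⟩
  have hT : ∀ b ∈ range (N + 1), (Tcount k 1 (n - 2 * (N + 1 - b - 1)) (b + 1) : ℤ) =
      ∑ c ∈ range (b + 1), (b.choose c : ℤ) * Ccount k (n - 2 * (N - c)) (c + 1) := by
    intro b hb
    rw [Tcount_eq_sum_choose_mul_Ccount (by omega : 0 < b + 1), ← sum_range_reflect]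
    push_cast
    refine sum_congr rfl fun c hc => ?_
    have := mem_range.mp hb
    have := mem_range.mp hc
    rw [Nat.choose_symm (by omega),
      show n - 2 * (N + 1 - b - 1) - 2 * (b - c) = n - 2 * (N - c) by omega,
      show b + 1 - (b - c) = c + 1 by omega]
  rw [sum_congr rfl fun b hb => by rw [hT b hb, show N + 1 - b - 1 = N - b by omega],
    Nat.add_sub_cancel, sum_neg_one_pow_mul_choose_mul_sum_choose, Nat.sub_self, mul_zero,
    Nat.sub_zero]

/-- C_k(n,h) = Σ_{b=0}^{h-1} (-1)^{h-b-1} C(h-1,b)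
T_{k,1}(n-2h+2b+2, b+1). -/
theorem stmt12 (k n h : ℕ) (hk : 2 ≤ k) (hh : 1 ≤ h) :
    (Ccount k n h : ℤ) = ∑ b ∈ Finset.range h,
      (-1 : ℤ) ^ (h - b - 1) * (Nat.choose (h - 1) b : ℤ) *
        (Tcount k 1 (n - 2 * (h - b - 1)) (b + 1) : ℤ) :=
  stmt12_general k n h hh
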